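/- arXiv:1406.7128 — 4 statements merged into one kernel-verified Lean document; each statement's English description precedes it below -/
import Mathlib

section
/- Contractivity of the decreasing rearrangement: for u, v ∈ L^p(Ω), 1 ≤ p ≤ ∞, one has ‖u_* − v_*‖_{L^p(0,|Ω|)} ≤ ‖u − v‖_{L^p(Ω)}. -/
/-!
Say that `(f, g)` under `ν` is dominated by `(f', g')` under `ν'` if
`ν {f > t, g < q} ≤ ν' {f' > t, g' < q}` for all `t, q`. For `1 ≤ p < ∞`,
`(b - a)₊ ^ p = ∫_{q > a} k(b - q) dq` with `k` the derivative of `x ↦ x₊ ^ p`; since `k` is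
nondecreasing, the layer-cake formula and Tonelli write `∫ (f - g)₊ ^ p dν` as an integral of
joint tails `ν {f > t, g < q}`, so domination gives `∫ (f - g)₊ ^ p dν ≤ ∫ (f' - g')₊ ^ p dν'`.
For `p = ∞`, `{f - g > M}` is the union of the sets `{f > q + M, g < q}`, `q ∈ ℚ`. Domination of
both `(f, g)` and `(g, f)` therefore bounds `‖f - g‖_p` by `‖f' - g'‖_p`.

On `(0, |Ω|)` one has `t < u_*(s) ↔ s < m_u(t)`, and `v_*(s) < q` forces `s ≥ |{v ≥ q}|`; so
`{u_* > t, v_* < q}` lies in an interval of length at most `|{u > t}| - |{v ≥ q}|`, which is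
at most `|{u > t, v < q}|`: `(u_*, v_*)` is dominated by `(u, v)`.
-/

open MeasureTheory Set

/-- Distribution function `m_u(q) = |{x ∈ Ω : u(x) > q}|`. -/
noncomputable def distFun {d : ℕ} (Ω : Set (EuclideanSpace ℝ (Fin d)))
    (u : EuclideanSpace ℝ (Fin d) → ℝ) (q : ℝ) : ℝ :=
  (volume {x | x ∈ Ω ∧ q < u x}).toReal

/-- Decreasing rearrangement `u_*(s) = inf {q : m_u(q) ≤ s}`. -/
noncomputable def decRearr {d : ℕ} (Ω : Set (EuclideanSpace ℝ (Fin d)))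
    (u : EuclideanSpace ℝ (Fin d) → ℝ) (s : ℝ) : ℝ :=
  sInf {q : ℝ | distFun Ω u q ≤ s}

open scoped ENNReal

-- The derivative of `x ↦ (max x 0) ^ p`; the `if` avoids the junk value `0 ^ 0 = 1` at `p = 1`.
noncomputable def rpowKernel (p x : ℝ) : ℝ := if 0 < x then p * x ^ (p - 1) else 0

lemma rpowKernel_nonneg {p : ℝ} (hp : 0 ≤ p) (x : ℝ) : 0 ≤ rpowKernel p x := by
  unfold rpowKernel
  split_ifs with hx
  · exact mul_nonneg hp (Real.rpow_nonneg hx.le _)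
  · exact le_rfl

lemma measurable_rpowKernel (p : ℝ) : Measurable (rpowKernel p) :=
  Measurable.ite measurableSet_Ioi (measurable_const.mul (measurable_id.pow_const _))
    measurable_const

lemma ofReal_ite_rpowKernel_eq_indicator (p a b q : ℝ) :
    ENNReal.ofReal (if a < q then rpowKernel p (b - q) else 0)
      = (Ioo a b).indicator (fun q => ENNReal.ofReal (p * (b - q) ^ (p - 1))) q := by
  by_cases haq : a < q <;> by_cases hqb : q < b <;>
    simp [rpowKernel, indicator, haq, hqb]

lemma lintegral_rpowKernel {p : ℝ} (hp : 0 < p) (a b : ℝ) :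
    ∫⁻ q, ENNReal.ofReal (if a < q then rpowKernel p (b - q) else 0)
      = ENNReal.ofReal (max (b - a) 0 ^ p) := by
  simp_rw [ofReal_ite_rpowKernel_eq_indicator]
  rw [lintegral_indicator measurableSet_Ioo]
  rcases le_or_gt b a with hba | hab
  · simp [hba, Real.zero_rpow hp.ne']
  have hcont : ContinuousOn (fun q => -(b - q) ^ p) (Icc a b) :=
    ((Real.continuous_rpow_const hp.le).comp (continuous_sub_left b)).neg.continuousOn
  have hderiv : ∀ q ∈ Ioo a b, HasDerivAt (fun q => -(b - q) ^ p) (p * (b - q) ^ (p - 1)) q := by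
    intro q hq
    simpa using (((hasDerivAt_id q).const_sub b).rpow_const
      (Or.inl (sub_pos.mpr hq.2).ne')).fun_neg
  have hnonneg : ∀ q ∈ Ioo a b, 0 ≤ p * (b - q) ^ (p - 1) := fun q hq =>
    mul_nonneg hp.le (Real.rpow_nonneg (sub_pos.mpr hq.2).le _)
  have hint := intervalIntegral.integrableOn_deriv_of_nonneg hcont hderiv hnonneg
  rw [Measure.restrict_congr_set Ioo_ae_eq_Ioc, ← ofReal_integral_eq_lintegral_ofReal hint
    ((ae_restrict_iff' measurableSet_Ioc).mpr (.of_forall fun q hq => ?_)),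
    ← intervalIntegral.integral_of_le hab.le, intervalIntegral.integral_eq_sub_of_hasDerivAt_of_le
      hab.le hcont hderiv ((intervalIntegrable_iff_integrableOn_Ioc_of_le hab.le).mpr hint)]
  · simp [Real.zero_rpow hp.ne', hab.le]
  · exact mul_nonneg hp.le (Real.rpow_nonneg (sub_nonneg.mpr hq.2) _)

lemma setOf_lt_rpowKernel {p r : ℝ} (hp : 1 ≤ p) (hr : 0 < r) :
    {x | r < rpowKernel p x} = ∅ ∨ ∃ c, {x | r < rpowKernel p x} = Ioi c := by
  rcases hp.eq_or_lt with rfl | hp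
  · by_cases hr1 : r < 1
    · refine .inr ⟨0, ?_⟩
      ext x
      by_cases hx : 0 < x <;> simp [rpowKernel, hx, hr1, hr.le]
    · refine .inl (eq_empty_of_forall_notMem fun x hx => ?_)
      by_cases hx0 : 0 < x <;> simp [rpowKernel, hx0] at hx <;> linarith
  · have hp0 : 0 < p := zero_lt_one.trans hp
    have hrp : 0 ≤ r / p := div_nonneg hr.le hp0.le
    refine .inr ⟨(r / p) ^ (p - 1)⁻¹, ?_⟩
    ext x
    by_cases hx : 0 < x
    · simp only [rpowKernel, hx, if_true, mem_ofPred_eq, mem_Ioi,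
        Real.rpow_inv_lt_iff_of_pos hrp hx.le (sub_pos.mpr hp), div_lt_iff₀' hp0]
    · simp only [rpowKernel, hx, if_false, mem_ofPred_eq, mem_Ioi]
      have := Real.rpow_nonneg hrp (p - 1)⁻¹
      constructor <;> intro h <;> linarith

lemma enorm_sub_rpow_eq {p : ℝ} (hp : 0 < p) (x y : ℝ) :
    ‖x - y‖ₑ ^ p = ENNReal.ofReal (max (x - y) 0 ^ p) + ENNReal.ofReal (max (y - x) 0 ^ p) := by
  rw [Real.enorm_eq_ofReal_abs, ENNReal.ofReal_rpow_of_nonneg (abs_nonneg _) hp.le]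
  rcases le_total y x with h | h
  · simp [abs_of_nonneg (sub_nonneg.mpr h), h, Real.zero_rpow hp.ne']
  · simp [abs_of_nonpos (sub_nonpos.mpr h), h, Real.zero_rpow hp.ne']

section JointTailLE

variable {α β : Type*} [MeasurableSpace α] [MeasurableSpace β]

def JointTailLE (ν : Measure α) (f g : α → ℝ) (ν' : Measure β) (f' g' : β → ℝ) : Prop :=
  ∀ t q : ℝ, ν ({a | t < f a} ∩ {a | g a < q}) ≤ ν' ({b | t < f' b} ∩ {b | g' b < q})

variable {ν : Measure α} {ν' : Measure β} {f g : α → ℝ} {f' g' : β → ℝ}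

lemma lintegral_ofReal_ite_eq_lintegral_meas_lt {μ : Measure α} (hf : AEMeasurable f μ)
    (hg : AEMeasurable g μ) {Ψ : ℝ → ℝ} (hΨm : Measurable Ψ) (hΨ0 : ∀ x, 0 ≤ Ψ x) (q : ℝ) :
    ∫⁻ a, ENNReal.ofReal (if g a < q then Ψ (f a) else 0) ∂μ
      = ∫⁻ r in Ioi 0, μ (f ⁻¹' {x | r < Ψ x} ∩ {a | g a < q}) := by
  have hm : Measurable fun z : ℝ × ℝ => if z.2 < q then Ψ z.1 else 0 :=
    Measurable.ite (measurableSet_lt measurable_snd measurable_const) (hΨm.comp measurable_fst)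
      measurable_const
  have hae : AEMeasurable (fun a => if g a < q then Ψ (f a) else 0) μ :=
    hm.comp_aemeasurable (hf.prodMk hg)
  rw [lintegral_eq_lintegral_meas_lt μ (.of_forall fun a => by split_ifs <;> simp [hΨ0]) hae]
  refine setLIntegral_congr_fun measurableSet_Ioi fun r hr => congr_arg μ ?_
  ext a
  by_cases ha : g a < q <;> simp [ha, le_of_lt (mem_Ioi.mp hr)]

lemma JointTailLE.lintegral_ofReal_ite_le (H : JointTailLE ν f g ν' f' g')
    (hf : AEMeasurable f ν) (hg : AEMeasurable g ν) (hf' : AEMeasurable f' ν')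
    (hg' : AEMeasurable g' ν') {Ψ : ℝ → ℝ} (hΨm : Measurable Ψ) (hΨ0 : ∀ x, 0 ≤ Ψ x)
    (hΨ : ∀ r > 0, {x | r < Ψ x} = ∅ ∨ ∃ c, {x | r < Ψ x} = Ioi c) (q : ℝ) :
    ∫⁻ a, ENNReal.ofReal (if g a < q then Ψ (f a) else 0) ∂ν
      ≤ ∫⁻ b, ENNReal.ofReal (if g' b < q then Ψ (f' b) else 0) ∂ν' := by
  rw [lintegral_ofReal_ite_eq_lintegral_meas_lt hf hg hΨm hΨ0,
    lintegral_ofReal_ite_eq_lintegral_meas_lt hf' hg' hΨm hΨ0]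
  refine setLIntegral_mono' measurableSet_Ioi fun r hr => ?_
  rcases hΨ r hr with h | ⟨c, h⟩
  · simp [h]
  · rw [h]
    exact H c q

lemma aemeasurable_uncurry_ofReal_ite_rpowKernel {μ : Measure α}
    (hf : AEMeasurable f μ) (hg : AEMeasurable g μ) (p : ℝ) :
    AEMeasurable (Function.uncurry fun a q =>
      ENNReal.ofReal (if g a < q then rpowKernel p (f a - q) else 0)) (μ.prod volume) := by
  have hm : Measurable fun z : (ℝ × ℝ) × ℝ =>
      ENNReal.ofReal (if z.1.2 < z.2 then rpowKernel p (z.1.1 - z.2) else 0) := by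
    refine (Measurable.ite (measurableSet_lt (measurable_snd.comp measurable_fst) measurable_snd)
      ((measurable_rpowKernel p).comp ((measurable_fst.comp measurable_fst).sub measurable_snd))
      measurable_const).ennreal_ofReal
  exact hm.comp_aemeasurable (((hf.prodMk hg).comp_quasiMeasurePreserving
    Measure.quasiMeasurePreserving_fst).prodMk measurable_snd.aemeasurable)

lemma JointTailLE.lintegral_posPart_sub_rpow_le [SFinite ν] [SFinite ν']
    (H : JointTailLE ν f g ν' f' g') (hf : AEMeasurable f ν) (hg : AEMeasurable g ν)
    (hf' : AEMeasurable f' ν') (hg' : AEMeasurable g' ν') {p : ℝ} (hp : 1 ≤ p) :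
    ∫⁻ a, ENNReal.ofReal (max (f a - g a) 0 ^ p) ∂ν
      ≤ ∫⁻ b, ENNReal.ofReal (max (f' b - g' b) 0 ^ p) ∂ν' := by
  have hp0 : 0 < p := zero_lt_one.trans_le hp
  have hshift : ∀ q r : ℝ, 0 < r → {x | r < rpowKernel p (x - q)} = ∅ ∨
      ∃ c, {x | r < rpowKernel p (x - q)} = Ioi c := by
    intro q r hr
    rcases setOf_lt_rpowKernel hp hr with h | ⟨c, h⟩
    · exact .inl (by simpa using congr_arg (preimage (· - q)) h)
    · exact .inr ⟨c + q, by simpa using congr_arg (preimage (· - q)) h⟩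
  calc ∫⁻ a, ENNReal.ofReal (max (f a - g a) 0 ^ p) ∂ν
      = ∫⁻ a, ∫⁻ q, ENNReal.ofReal
          (if g a < q then rpowKernel p (f a - q) else 0) ∂volume ∂ν := by
        simp_rw [lintegral_rpowKernel hp0]
    _ = ∫⁻ q, ∫⁻ a, ENNReal.ofReal
          (if g a < q then rpowKernel p (f a - q) else 0) ∂ν ∂volume :=
        lintegral_lintegral_swap (aemeasurable_uncurry_ofReal_ite_rpowKernel hf hg p)
    _ ≤ ∫⁻ q, ∫⁻ b, ENNReal.ofReal
          (if g' b < q then rpowKernel p (f' b - q) else 0) ∂ν' ∂volume :=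
        lintegral_mono fun q => H.lintegral_ofReal_ite_le hf hg hf' hg'
          ((measurable_rpowKernel p).comp (measurable_id.sub_const q))
          (fun x => rpowKernel_nonneg hp0.le _) (hshift q) q
    _ = ∫⁻ b, ENNReal.ofReal (max (f' b - g' b) 0 ^ p) ∂ν' := by
        rw [← lintegral_lintegral_swap (aemeasurable_uncurry_ofReal_ite_rpowKernel hf' hg' p)]
        simp_rw [lintegral_rpowKernel hp0]

lemma JointTailLE.ae_sub_le (H : JointTailLE ν f g ν' f' g') {M : ℝ}
    (h : ∀ᵐ b ∂ν', f' b - g' b ≤ M) : ∀ᵐ a ∂ν, f a - g a ≤ M := by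
  have hcover : {a | ¬f a - g a ≤ M} ⊆ ⋃ q : ℚ, {a | q + M < f a} ∩ {a | g a < q} := by
    intro a ha
    obtain ⟨q, hgq, hqf⟩ := exists_rat_btwn (show g a < f a - M by linarith [not_le.mp ha])
    exact mem_iUnion.mpr
      ⟨q, by simp only [mem_inter_iff, mem_ofPred_eq]; constructor <;> linarith⟩
  have hnull : ∀ q : ℚ, ν' ({b | q + M < f' b} ∩ {b | g' b < q}) = 0 := fun q =>
    measure_mono_null (fun b hb => by simp only [mem_inter_iff, mem_ofPred_eq] at hb ⊢; linarith)
      (ae_iff.mp h)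
  exact ae_iff.mpr (measure_mono_null hcover
    (measure_iUnion_null fun q => le_zero_iff.mp ((H _ _).trans (hnull q).le)))

lemma JointTailLE.eLpNormEssSup_sub_le (H₁ : JointTailLE ν f g ν' f' g')
    (H₂ : JointTailLE ν g f ν' g' f') :
    eLpNormEssSup (fun a => f a - g a) ν ≤ eLpNormEssSup (fun b => f' b - g' b) ν' := by
  set C := eLpNormEssSup (fun b => f' b - g' b) ν'
  rcases eq_or_ne C ⊤ with hC | hC
  · exact hC ▸ le_top
  have hbound : ∀ᵐ b ∂ν', |f' b - g' b| ≤ C.toReal := by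
    filter_upwards [enorm_ae_le_eLpNormEssSup (fun b => f' b - g' b) ν'] with b hb
    rwa [Real.enorm_eq_ofReal_abs, ENNReal.ofReal_le_iff_le_toReal hC] at hb
  have h₁ := H₁.ae_sub_le (M := C.toReal) (hbound.mono fun b hb => (abs_le.mp hb).2)
  have h₂ := H₂.ae_sub_le (M := C.toReal) (hbound.mono fun b hb => by
    linarith [(abs_le.mp hb).1])
  refine (eLpNormEssSup_le_of_ae_bound ?_).trans_eq (ENNReal.ofReal_toReal hC)
  filter_upwards [h₁, h₂] with a ha₁ ha₂
  rw [Real.norm_eq_abs, abs_le]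
  constructor <;> linarith

theorem JointTailLE.eLpNorm_sub_le [SFinite ν] [SFinite ν']
    (H₁ : JointTailLE ν f g ν' f' g') (H₂ : JointTailLE ν g f ν' g' f')
    (hf : AEMeasurable f ν) (hg : AEMeasurable g ν) (hf' : AEMeasurable f' ν')
    (hg' : AEMeasurable g' ν') {p : ℝ≥0∞} (hp : 1 ≤ p) :
    eLpNorm (fun a => f a - g a) p ν ≤ eLpNorm (fun b => f' b - g' b) p ν' := by
  rcases eq_or_ne p ⊤ with rfl | hp_top
  · simpa only [eLpNorm_exponent_top] using H₁.eLpNormEssSup_sub_le H₂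
  have hp₀ : p ≠ 0 := (zero_lt_one.trans_le hp).ne'
  have hp₁ : 1 ≤ p.toReal := by simpa using ENNReal.toReal_mono hp_top hp
  have hp₀' : 0 < p.toReal := zero_lt_one.trans_le hp₁
  rw [eLpNorm_eq_lintegral_rpow_enorm_toReal hp₀ hp_top,
    eLpNorm_eq_lintegral_rpow_enorm_toReal hp₀ hp_top]
  gcongr ?_ ^ _
  simp_rw [enorm_sub_rpow_eq hp₀']
  rw [lintegral_add_left' (by fun_prop), lintegral_add_left' (by fun_prop)]
  exact add_le_add (H₁.lintegral_posPart_sub_rpow_le hf hg hf' hg' hp₁)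
    (H₂.lintegral_posPart_sub_rpow_le hg hf hg' hf' hp₁)

end JointTailLE

section Rearrangement

variable {d : ℕ} {Ω : Set (EuclideanSpace ℝ (Fin d))} {u v : EuclideanSpace ℝ (Fin d) → ℝ}

lemma volume_superlevel_ne_top (hfin : volume Ω ≠ ⊤) (q : ℝ) :
    volume {x | x ∈ Ω ∧ q < u x} ≠ ⊤ :=
  ne_top_of_le_ne_top hfin (measure_mono fun _ hx => hx.1)

lemma distFun_antitone (hfin : volume Ω ≠ ⊤) : Antitone (distFun Ω u) := fun _ _ h =>
  ENNReal.toReal_mono (volume_superlevel_ne_top hfin _)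
    (measure_mono fun _ hx => ⟨hx.1, h.trans_lt hx.2⟩)

lemma exists_distFun_le (hΩ : MeasurableSet Ω) (hfin : volume Ω ≠ ⊤) (hu : Measurable u)
    {s : ℝ} (hs : 0 < s) : ∃ q, distFun Ω u q ≤ s := by
  have hanti : Antitone fun q : ℝ => {x | x ∈ Ω ∧ q < u x} := fun _ _ h _ hx =>
    ⟨hx.1, h.trans_lt hx.2⟩
  have hempty : ⋂ q : ℝ, {x | x ∈ Ω ∧ q < u x} = ∅ :=
    eq_empty_of_forall_notMem fun x hx => (mem_iInter.mp hx (u x)).2.false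
  have hinf : ⨅ q : ℝ, volume {x | x ∈ Ω ∧ q < u x} < ENNReal.ofReal s := by
    rw [← hanti.measure_iInter (fun _ => (hΩ.inter (hu measurableSet_Ioi)).nullMeasurableSet)
      ⟨0, volume_superlevel_ne_top hfin 0⟩, hempty, measure_empty]
    exact ENNReal.ofReal_pos.mpr hs
  obtain ⟨q, hq⟩ := iInf_lt_iff.mp hinf
  exact ⟨q, ENNReal.toReal_le_of_le_ofReal hs.le hq.le⟩

lemma exists_lt_distFun (hfin : volume Ω ≠ ⊤) {s : ℝ} (hs : 0 ≤ s)
    (hsL : s < (volume Ω).toReal) : ∃ q, s < distFun Ω u q := by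
  have hmono : Monotone fun q : ℝ => {x | x ∈ Ω ∧ -q < u x} := fun _ _ h _ hx =>
    ⟨hx.1, (neg_le_neg h).trans_lt hx.2⟩
  have hunion : ⋃ q : ℝ, {x | x ∈ Ω ∧ -q < u x} = Ω :=
    Subset.antisymm (iUnion_subset fun _ _ hx => hx.1)
      fun x hx => mem_iUnion.mpr ⟨-u x + 1, hx, by linarith⟩
  have hlt : ENNReal.ofReal s < ⨆ q : ℝ, volume {x | x ∈ Ω ∧ -q < u x} := by
    rwa [← hmono.measure_iUnion, hunion, ENNReal.ofReal_lt_iff_lt_toReal hs hfin]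
  obtain ⟨q, hq⟩ := lt_iSup_iff.mp hlt
  exact ⟨-q, (ENNReal.ofReal_lt_iff_lt_toReal hs (volume_superlevel_ne_top hfin _)).mp hq⟩

lemma distFun_le_of_forall_lt (hfin : volume Ω ≠ ⊤) {q s : ℝ} (hs : 0 ≤ s)
    (h : ∀ q' > q, distFun Ω u q' ≤ s) : distFun Ω u q ≤ s := by
  have hmono : Monotone fun n : ℕ => {x | x ∈ Ω ∧ q + 1 / (n + 1) < u x} := by
    intro m n hmn x hx
    refine ⟨hx.1, lt_of_le_of_lt ?_ hx.2⟩
    gcongr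
  have hunion : ⋃ n : ℕ, {x | x ∈ Ω ∧ q + 1 / (n + 1) < u x} = {x | x ∈ Ω ∧ q < u x} := by
    refine Subset.antisymm (iUnion_subset fun n x hx => ⟨hx.1, ?_⟩) fun x hx => ?_
    · exact lt_trans (lt_add_of_pos_right q Nat.one_div_pos_of_nat) hx.2
    · obtain ⟨n, hn⟩ := exists_nat_one_div_lt (sub_pos.mpr hx.2)
      exact mem_iUnion.mpr ⟨n, hx.1, by linarith⟩
  refine ENNReal.toReal_le_of_le_ofReal hs ?_
  rw [← hunion, hmono.measure_iUnion]
  exact iSup_le fun n =>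
    (ENNReal.le_ofReal_iff_toReal_le (volume_superlevel_ne_top hfin _) hs).mpr
      (h _ (lt_add_of_pos_right q Nat.one_div_pos_of_nat))

lemma setOf_distFun_le_eq_Ici (hΩ : MeasurableSet Ω) (hfin : volume Ω ≠ ⊤) (hu : Measurable u)
    {s : ℝ} (hs : 0 < s) (hsL : s < (volume Ω).toReal) :
    {q | distFun Ω u q ≤ s} = Ici (decRearr Ω u s) := by
  have hne : {q | distFun Ω u q ≤ s}.Nonempty := exists_distFun_le hΩ hfin hu hs
  have hbdd : BddBelow {q | distFun Ω u q ≤ s} := by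
    obtain ⟨q₀, hq₀⟩ := exists_lt_distFun (u := u) hfin hs.le hsL
    exact ⟨q₀, fun q hq => le_of_not_gt fun hlt =>
      (hq.trans_lt hq₀).not_ge (distFun_antitone hfin hlt.le)⟩
  have hmem : distFun Ω u (decRearr Ω u s) ≤ s := by
    refine distFun_le_of_forall_lt hfin hs.le fun q' hq' => ?_
    obtain ⟨q, hq, hqq'⟩ := exists_lt_of_csInf_lt hne hq'
    exact (distFun_antitone hfin hqq'.le).trans hq
  ext q
  exact ⟨fun hq => csInf_le hbdd hq, fun hq => (distFun_antitone hfin hq).trans hmem⟩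

lemma decRearr_le_iff (hΩ : MeasurableSet Ω) (hfin : volume Ω ≠ ⊤) (hu : Measurable u)
    {s t : ℝ} (hs : 0 < s) (hsL : s < (volume Ω).toReal) :
    decRearr Ω u s ≤ t ↔ distFun Ω u t ≤ s := by
  rw [← mem_Ici, ← setOf_distFun_le_eq_Ici hΩ hfin hu hs hsL, mem_ofPred_eq]

lemma antitoneOn_decRearr (hΩ : MeasurableSet Ω) (hfin : volume Ω ≠ ⊤) (hu : Measurable u) :
    AntitoneOn (decRearr Ω u) (Ioo 0 (volume Ω).toReal) := fun _ hs _ hs' hss' =>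
  (decRearr_le_iff hΩ hfin hu hs'.1 hs'.2).mpr
    (((decRearr_le_iff hΩ hfin hu hs.1 hs.2).mp le_rfl).trans hss')

lemma jointTailLE_decRearr (hΩ : MeasurableSet Ω) (hfin : volume Ω ≠ ⊤) (hu : Measurable u)
    (hv : Measurable v) :
    JointTailLE (volume.restrict (Ioo 0 (volume Ω).toReal)) (decRearr Ω u) (decRearr Ω v)
      (volume.restrict Ω) u v := by
  intro t q
  set L := (volume Ω).toReal
  set ρ := (volume {x | x ∈ Ω ∧ q ≤ v x}).toReal
  have hsub : {s | t < decRearr Ω u s} ∩ {s | decRearr Ω v s < q} ∩ Ioo 0 L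
      ⊆ Ico ρ (distFun Ω u t) := by
    rintro s ⟨⟨hts, hsq⟩, hs⟩
    refine ⟨?_, not_le.mp fun h => hts.not_ge ((decRearr_le_iff hΩ hfin hu hs.1 hs.2).mpr h)⟩
    refine le_trans ?_ ((decRearr_le_iff hΩ hfin hv hs.1 hs.2).mp le_rfl)
    exact ENNReal.toReal_mono (volume_superlevel_ne_top hfin _)
      (measure_mono fun x hx => ⟨hx.1, hsq.trans_le hx.2⟩)
  rw [Measure.restrict_apply' measurableSet_Ioo, Measure.restrict_apply' hΩ]
  refine (measure_mono hsub).trans ?_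
  rw [Real.volume_Ico, ENNReal.ofReal_sub _ ENNReal.toReal_nonneg, distFun,
    ENNReal.ofReal_toReal (volume_superlevel_ne_top hfin _),
    ENNReal.ofReal_toReal (ne_top_of_le_ne_top hfin (measure_mono fun _ hx => hx.1)),
    tsub_le_iff_right]
  refine (measure_mono fun x hx => ?_).trans (measure_union_le _ _)
  by_cases hvx : v x < q
  · exact .inl ⟨⟨hx.2, hvx⟩, hx.1⟩
  · exact .inr ⟨hx.1, not_lt.mp hvx⟩

end Rearrangement

theorem stmt_3_general {d : ℕ} (Ω : Set (EuclideanSpace ℝ (Fin d)))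
    (hΩo : IsOpen Ω) (hΩb : Bornology.IsBounded Ω)
    (p : ENNReal) (hp : 1 ≤ p)
    (u v : EuclideanSpace ℝ (Fin d) → ℝ) (hu : Measurable u) (hv : Measurable v) :
    eLpNorm (fun s => decRearr Ω u s - decRearr Ω v s) p
        (volume.restrict (Ioo (0 : ℝ) ((volume Ω).toReal)))
      ≤ eLpNorm (fun x => u x - v x) p (volume.restrict Ω) := by
  have hΩ : MeasurableSet Ω := hΩo.measurableSet
  have hfin : volume Ω ≠ ⊤ := hΩb.measure_lt_top.ne
  exact (jointTailLE_decRearr hΩ hfin hu hv).eLpNorm_sub_le (jointTailLE_decRearr hΩ hfin hv hu)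
    (aemeasurable_restrict_of_antitoneOn measurableSet_Ioo (antitoneOn_decRearr hΩ hfin hu))
    (aemeasurable_restrict_of_antitoneOn measurableSet_Ioo (antitoneOn_decRearr hΩ hfin hv))
    hu.aemeasurable hv.aemeasurable hp

/-- Contractivity of the decreasing rearrangement in `L^p`, `1 ≤ p ≤ ∞`. -/
theorem stmt_3 {d : ℕ} (Ω : Set (EuclideanSpace ℝ (Fin d)))
    (hΩo : IsOpen Ω) (hΩb : Bornology.IsBounded Ω)
    (p : ENNReal) (hp : 1 ≤ p)
    (u v : EuclideanSpace ℝ (Fin d) → ℝ) (hu : Measurable u) (hv : Measurable v)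
    (hup : MemLp u p (volume.restrict Ω)) (hvp : MemLp v p (volume.restrict Ω)) :
    eLpNorm (fun s => decRearr Ω u s - decRearr Ω v s) p
        (volume.restrict (Ioo (0 : ℝ) ((volume Ω).toReal)))
      ≤ eLpNorm (fun x => u x - v x) p (volume.restrict Ω) :=
  stmt_3_general Ω hΩo hΩb p hp u v hu hv
end

section
/- For step functions u = Σ_i q_i χ_{E_i} (q_1 > … > q_n) and v = Σ_j r_j χ_{F_j} (r_1 > … > r_m), for all sufficiently small t > 0 the level sets of u + t v are exactly the sets E_i ∩ F_j, and each level of u + t v is contained in exactly one level set of u; consequently the relative rearrangement v_{*u} equals r_j on the interval J_j^i = [a_{i−1} + Σ_{k<j}|E_i ∩ F_k|, a_{i−1} + Σ_{k≤j}|E_i ∩ F_k|), where a_i = Σ_{k≤i}|E_k|. -/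
open MeasureTheory Set

/-!
For small `t > 0` the perturbation `t * r j` is smaller than every gap between distinct values
of `q`, so the values `q i + t * r j` of `u + t v` on the cells `E i ∩ F j` are strictly
decreasing for the lexicographic order on `(i, j)`. The decreasing rearrangement of a step
function is explicit: it takes the value `c α` of a piece `G α` on the interval of length `|G α|`
that starts at the total measure of the pieces with larger values. On `J_j^i` this gives
`(u + t v)_* = q i + t * r j` and `u_* = q i`, so the difference quotient is constantly `r j`.
-/

open Filter Topology Function

theorem sum_indicator_apply_of_mem {α ι M : Type*} [Fintype ι] [AddCommMonoid M]
    {E : ι → Set α} (hE : Pairwise (Disjoint on E)) (q : ι → M) {x : α} {i : ι}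
    (hx : x ∈ E i) : ∑ k, (E k).indicator (fun _ => q k) x = q i := by
  rw [Finset.sum_eq_single i (fun k _ hk => indicator_of_notMem
    (disjoint_right.mp (hE hk) hx) _) (by simp), indicator_of_mem hx]

section Partition

variable {α ι : Type*} {Ω : Set α}

theorem setOf_mem_and_eq_of_iUnion_eq {G : ι → Set α} {c : ι → ℝ} {w : α → ℝ}
    (hc : Injective c) (hGu : ⋃ β, G β = Ω) (hw : ∀ β, ∀ x ∈ G β, w x = c β)
    (β : ι) : {x | x ∈ Ω ∧ w x = c β} = G β := by
  ext x
  constructor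
  · rintro ⟨hx, hxβ⟩
    obtain ⟨γ, hγ⟩ := mem_iUnion.mp (hGu ▸ hx)
    rwa [← hc ((hw γ x hγ).symm.trans hxβ)]
  · intro hx
    exact ⟨hGu ▸ mem_iUnion_of_mem β hx, hw β x hx⟩

theorem sum_measureReal_inter_of_iUnion_eq [MeasurableSpace α] {μ : Measure α} [Fintype ι]
    {F : ι → Set α}
    (hFm : ∀ j, MeasurableSet (F j)) (hFd : Pairwise (Disjoint on F)) (hFu : ⋃ j, F j = Ω)
    {s : Set α} (hsm : MeasurableSet s) (hsΩ : s ⊆ Ω) (hs : μ s ≠ ⊤) :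
    ∑ j, μ.real (s ∩ F j) = μ.real s := by
  rw [← measureReal_iUnion_fintype (fun j k hjk => (hFd hjk).mono inter_subset_right
    inter_subset_right) (fun j => hsm.inter (hFm j))
    (fun j => measure_ne_top_of_subset inter_subset_left hs), ← inter_iUnion, hFu,
    inter_eq_left.mpr hsΩ]

end Partition

section CommonRefinement

variable {α ι κ : Type*} {Ω : Set α} {E : ι → Set α} {F : κ → Set α}

def commonRefinement (E : ι → Set α) (F : κ → Set α) (p : ι ×ₗ κ) : Set α :=
  E (ofLex p).1 ∩ F (ofLex p).2

theorem pairwise_disjoint_commonRefinement (hE : Pairwise (Disjoint on E))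
    (hF : Pairwise (Disjoint on F)) : Pairwise (Disjoint on commonRefinement E F) := by
  intro p p' hpp'
  by_cases h₁ : (ofLex p).1 = (ofLex p').1
  · have h₂ : (ofLex p).2 ≠ (ofLex p').2 := fun h₂ => hpp' (Prod.ext h₁ h₂)
    exact (hF h₂).mono inter_subset_right inter_subset_right
  · exact (hE h₁).mono inter_subset_left inter_subset_left

theorem iUnion_commonRefinement (hE : ⋃ i, E i = Ω) (hF : ⋃ j, F j = Ω) :
    ⋃ p, commonRefinement E F p = Ω := by
  refine Subset.antisymm (iUnion_subset fun p => inter_subset_left.trans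
    (hE ▸ subset_iUnion E _)) fun x hx => ?_
  obtain ⟨i, hi⟩ := mem_iUnion.mp (hE ▸ hx)
  obtain ⟨j, hj⟩ := mem_iUnion.mp (hF ▸ hx)
  exact mem_iUnion_of_mem (toLex (i, j)) ⟨hi, hj⟩

end CommonRefinement

section StepFunction

variable {d : ℕ} {Ω : Set (EuclideanSpace ℝ (Fin d))} {ι : Type*} [Fintype ι]
  {G : ι → Set (EuclideanSpace ℝ (Fin d))} {c : ι → ℝ} {w : EuclideanSpace ℝ (Fin d) → ℝ}

theorem distFun_eq_sum_of_iUnion_eq (hΩ : volume Ω ≠ ⊤) (hGm : ∀ β, MeasurableSet (G β))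
    (hGd : Pairwise (Disjoint on G)) (hGu : ⋃ β, G β = Ω) (hw : ∀ β, ∀ x ∈ G β, w x = c β)
    (p : ℝ) :
    distFun Ω w p = ∑ β ∈ Finset.univ.filter (fun β => p < c β), volume.real (G β) := by
  have hlevel : {x | x ∈ Ω ∧ p < w x} = ⋃ β ∈ Finset.univ.filter (fun β => p < c β), G β := by
    ext x
    simp only [mem_ofPred_eq, mem_iUnion, Finset.mem_filter, Finset.mem_univ, true_and,
      exists_prop]
    constructor
    · rintro ⟨hx, hpx⟩
      obtain ⟨β, hβ⟩ := mem_iUnion.mp (hGu ▸ hx)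
      exact ⟨β, hw β x hβ ▸ hpx, hβ⟩
    · rintro ⟨β, hpβ, hβ⟩
      exact ⟨hGu ▸ mem_iUnion_of_mem β hβ, (hw β x hβ).symm ▸ hpβ⟩
  rw [distFun, ← measureReal_def, hlevel, measureReal_biUnion_finset
    (hGd.set_pairwise _) (fun β _ => hGm β)
    (fun β _ => measure_ne_top_of_subset (hGu ▸ subset_iUnion G β) hΩ)]

theorem decRearr_eq_of_iUnion_eq (hΩ : volume Ω ≠ ⊤) (hGm : ∀ β, MeasurableSet (G β))
    (hGd : Pairwise (Disjoint on G)) (hGu : ⋃ β, G β = Ω) (hw : ∀ β, ∀ x ∈ G β, w x = c β)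
    (α : ι) {s : ℝ}
    (hs₁ : ∑ β ∈ Finset.univ.filter (fun β => c α < c β), volume.real (G β) ≤ s)
    (hs₂ : s < ∑ β ∈ Finset.univ.filter (fun β => c α < c β), volume.real (G β)
      + volume.real (G α)) :
    decRearr Ω w s = c α := by
  suffices {p : ℝ | distFun Ω w p ≤ s} = Ici (c α) by rw [decRearr, this, csInf_Ici]
  ext p
  rw [mem_ofPred_eq, mem_Ici, distFun_eq_sum_of_iUnion_eq hΩ hGm hGd hGu hw]
  constructor
  · classical
    intro hp
    by_contra! hpα
    have hsub : insert α (Finset.univ.filter fun β => c α < c β)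
        ⊆ Finset.univ.filter fun β => p < c β := by
      intro β hβ
      simp only [Finset.mem_insert, Finset.mem_filter, Finset.mem_univ, true_and] at hβ ⊢
      rcases hβ with rfl | hβ
      exacts [hpα, hpα.trans hβ]
    have := Finset.sum_le_sum_of_subset_of_nonneg (f := fun β => volume.real (G β)) hsub
      fun β _ _ => measureReal_nonneg
    rw [Finset.sum_insert (by simp)] at this
    linarith
  · refine fun hp => le_trans (Finset.sum_le_sum_of_subset_of_nonneg (fun β => ?_)
      fun β _ _ => measureReal_nonneg) hs₁
    simpa only [Finset.mem_filter, Finset.mem_univ, true_and] using hp.trans_lt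

theorem decRearr_eq_of_strictAnti [LinearOrder ι] (hc : StrictAnti c) (hΩ : volume Ω ≠ ⊤)
    (hGm : ∀ β, MeasurableSet (G β)) (hGd : Pairwise (Disjoint on G)) (hGu : ⋃ β, G β = Ω)
    (hw : ∀ β, ∀ x ∈ G β, w x = c β) (α : ι) {s : ℝ}
    (hs₁ : ∑ β ∈ Finset.univ.filter (· < α), volume.real (G β) ≤ s)
    (hs₂ : s < ∑ β ∈ Finset.univ.filter (· < α), volume.real (G β) + volume.real (G α)) :
    decRearr Ω w s = c α := by
  have hfilter : Finset.univ.filter (fun β => c α < c β) = Finset.univ.filter (· < α) := by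
    simp only [hc.lt_iff_gt]
  rw [← hfilter] at hs₁ hs₂
  exact decRearr_eq_of_iUnion_eq hΩ hGm hGd hGu hw α hs₁ hs₂

end StepFunction

theorem eventually_strictAnti_lex {ι κ : Type*} [Finite ι] [Finite κ] [Preorder ι] [Preorder κ]
    {q : ι → ℝ} {r : κ → ℝ} (hq : StrictAnti q) (hr : StrictAnti r) :
    ∀ᶠ t in 𝓝[>] 0, StrictAnti fun p : ι ×ₗ κ => q (ofLex p).1 + t * r (ofLex p).2 := by
  have hgap : ∀ᶠ t in 𝓝 (0 : ℝ), ∀ i i' j j', q i < q i' → q i + t * r j < q i' + t * r j' := by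
    simp only [eventually_all]
    intro i i' j j' hii'
    exact (by fun_prop : Continuous fun t : ℝ => q i + t * r j).continuousAt.eventually_lt
      (by fun_prop : Continuous fun t : ℝ => q i' + t * r j').continuousAt (by simpa using hii')
  filter_upwards [nhdsWithin_le_nhds hgap, self_mem_nhdsWithin] with t hgap (ht : 0 < t)
  intro p p' hpp'
  rcases Prod.Lex.lt_iff.mp hpp' with h₁ | ⟨h₁, h₂⟩
  · exact hgap _ _ _ _ (hq h₁)
  · simp only [h₁]
    exact add_lt_add_right (mul_lt_mul_of_pos_left (hr h₂) ht) _

theorem sum_filter_lt_toLex {ι κ M : Type*} [Fintype ι] [LinearOrder ι] [Fintype κ]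
    [LinearOrder κ] [AddCommMonoid M] (f : ι → κ → M) (i : ι) (j : κ) :
    ∑ p ∈ Finset.univ.filter (· < toLex (i, j)), f (ofLex p).1 (ofLex p).2
      = ∑ k ∈ Finset.univ.filter (· < i), ∑ l, f k l
        + ∑ l ∈ Finset.univ.filter (· < j), f i l := by
  have hfilter : Finset.univ.filter (· < toLex (i, j))
      = ((Finset.univ.filter (· < i) ×ˢ Finset.univ).disjUnion
          ({i} ×ˢ Finset.univ.filter (· < j)) (by
            simp +contextual [Finset.disjoint_left, ne_of_gt])).map toLex.toEmbedding := by
    ext p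
    simp [Finset.mem_map_equiv, Prod.Lex.lt_iff, Prod.ext_iff, eq_comm, and_comm]
  rw [hfilter, Finset.sum_map, Finset.sum_disjUnion, Finset.sum_product, Finset.sum_product,
    Finset.sum_singleton]
  rfl

section RefinedStepFunction

variable {d : ℕ} {Ω : Set (EuclideanSpace ℝ (Fin d))} {ι κ : Type*}
  [Fintype ι] [LinearOrder ι] [Fintype κ] [LinearOrder κ]
  {E : ι → Set (EuclideanSpace ℝ (Fin d))} {F : κ → Set (EuclideanSpace ℝ (Fin d))}
  {q : ι → ℝ} {r : κ → ℝ} {u v : EuclideanSpace ℝ (Fin d) → ℝ} {i : ι} {j : κ} {s : ℝ}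

theorem decRearr_eq_of_lex_bounds (hq : StrictAnti q) (hΩ : volume Ω ≠ ⊤)
    (hEm : ∀ i, MeasurableSet (E i)) (hEd : Pairwise (Disjoint on E)) (hEu : ⋃ i, E i = Ω)
    (hFm : ∀ j, MeasurableSet (F j)) (hFd : Pairwise (Disjoint on F)) (hFu : ⋃ j, F j = Ω)
    (huE : ∀ i, ∀ x ∈ E i, u x = q i)
    (hs₁ : ∑ k ∈ Finset.univ.filter (· < i), volume.real (E k)
      + ∑ l ∈ Finset.univ.filter (· < j), volume.real (E i ∩ F l) ≤ s)
    (hs₂ : s < ∑ k ∈ Finset.univ.filter (· < i), volume.real (E k)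
      + ∑ l ∈ Finset.univ.filter (· ≤ j), volume.real (E i ∩ F l)) :
    decRearr Ω u s = q i := by
  have hEi : ∑ l ∈ Finset.univ.filter (· ≤ j), volume.real (E i ∩ F l) ≤ volume.real (E i) :=
    (Finset.sum_le_sum_of_subset_of_nonneg (Finset.filter_subset _ _)
      fun _ _ _ => measureReal_nonneg).trans_eq
    (sum_measureReal_inter_of_iUnion_eq hFm hFd hFu (hEm i) (hEu ▸ subset_iUnion E i)
      (measure_ne_top_of_subset (hEu ▸ subset_iUnion E i) hΩ))
  have hB : 0 ≤ ∑ l ∈ Finset.univ.filter (· < j), volume.real (E i ∩ F l) :=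
    Finset.sum_nonneg fun _ _ => measureReal_nonneg
  exact decRearr_eq_of_strictAnti hq hΩ hEm hEd hEu huE i (by linarith) (by linarith)

theorem decRearr_add_mul_eq_of_lex_bounds {t : ℝ}
    (hc : StrictAnti fun p : ι ×ₗ κ => q (ofLex p).1 + t * r (ofLex p).2)
    (hΩ : volume Ω ≠ ⊤) (hEm : ∀ i, MeasurableSet (E i)) (hEd : Pairwise (Disjoint on E))
    (hEu : ⋃ i, E i = Ω) (hFm : ∀ j, MeasurableSet (F j)) (hFd : Pairwise (Disjoint on F))
    (hFu : ⋃ j, F j = Ω) (huE : ∀ i, ∀ x ∈ E i, u x = q i) (hvF : ∀ j, ∀ x ∈ F j, v x = r j)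
    (hs₁ : ∑ k ∈ Finset.univ.filter (· < i), volume.real (E k)
      + ∑ l ∈ Finset.univ.filter (· < j), volume.real (E i ∩ F l) ≤ s)
    (hs₂ : s < ∑ k ∈ Finset.univ.filter (· < i), volume.real (E k)
      + ∑ l ∈ Finset.univ.filter (· ≤ j), volume.real (E i ∩ F l)) :
    decRearr Ω (fun x => u x + t * v x) s = q i + t * r j := by
  have hlower : ∑ p ∈ Finset.univ.filter (· < toLex (i, j)),
      volume.real (commonRefinement E F p)
      = ∑ k ∈ Finset.univ.filter (· < i), volume.real (E k)
        + ∑ l ∈ Finset.univ.filter (· < j), volume.real (E i ∩ F l) :=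
    (sum_filter_lt_toLex (fun k l => volume.real (E k ∩ F l)) i j).trans <|
      congrArg (· + _) <| Finset.sum_congr rfl fun k _ =>
        sum_measureReal_inter_of_iUnion_eq hFm hFd hFu (hEm k) (hEu ▸ subset_iUnion E k)
          (measure_ne_top_of_subset (hEu ▸ subset_iUnion E k) hΩ)
  have hle : Finset.univ.filter (· ≤ j) = insert j (Finset.univ.filter (· < j)) := by
    ext l
    simp [le_iff_lt_or_eq, or_comm]
  rw [hle, Finset.sum_insert (by simp)] at hs₂
  refine decRearr_eq_of_strictAnti (G := commonRefinement E F) hc hΩ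
    (fun p => (hEm _).inter (hFm _)) (pairwise_disjoint_commonRefinement hEd hFd)
    (iUnion_commonRefinement hEu hFu) (fun p x hx => by rw [huE _ x hx.1, hvF _ x hx.2])
    (toLex (i, j)) (hlower ▸ hs₁) ?_
  rw [hlower, add_assoc, add_comm _ (volume.real _)]
  exact hs₂

end RefinedStepFunction

theorem stmt_9_general {d : ℕ} (Ω : Set (EuclideanSpace ℝ (Fin d)))
    (hΩb : Bornology.IsBounded Ω)
    (n m : ℕ) (q : Fin n → ℝ) (hq : StrictAnti q) (r : Fin m → ℝ) (hr : StrictAnti r)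
    (E : Fin n → Set (EuclideanSpace ℝ (Fin d)))
    (hEm : ∀ i, MeasurableSet (E i))
    (hEd : ∀ i j, i ≠ j → Disjoint (E i) (E j))
    (hEu : (⋃ i, E i) = Ω)
    (F : Fin m → Set (EuclideanSpace ℝ (Fin d)))
    (hFm : ∀ j, MeasurableSet (F j))
    (hFd : ∀ i j, i ≠ j → Disjoint (F i) (F j))
    (hFu : (⋃ j, F j) = Ω)
    (u v : EuclideanSpace ℝ (Fin d) → ℝ)
    (hu : ∀ x, u x = ∑ i, Set.indicator (E i) (fun _ => q i) x)
    (hv : ∀ x, v x = ∑ j, Set.indicator (F j) (fun _ => r j) x) :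
    (∃ t0 > (0 : ℝ), ∀ t, 0 < t → t < t0 →
      (∀ (i : Fin n) (j : Fin m),
        {x | x ∈ Ω ∧ u x + t * v x = q i + t * r j} = E i ∩ F j) ∧
      (∀ x ∈ Ω, ∀ y ∈ Ω, u x + t * v x = u y + t * v y → u x = u y))
    ∧ (∀ (i : Fin n) (j : Fin m) (s : ℝ),
        (∑ k ∈ Finset.univ.filter (fun k => k < i), (volume (E k)).toReal)
            + (∑ k ∈ Finset.univ.filter (fun k => k < j), (volume (E i ∩ F k)).toReal) ≤ s →
        s < (∑ k ∈ Finset.univ.filter (fun k => k < i), (volume (E k)).toReal)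
            + (∑ k ∈ Finset.univ.filter (fun k => k ≤ j), (volume (E i ∩ F k)).toReal) →
        Tendsto (fun t : ℝ =>
            (decRearr Ω (fun x => u x + t * v x) s - decRearr Ω u s) / t)
          (nhdsWithin 0 (Ioi 0)) (nhds (r j))) := by
  have hΩ : volume Ω ≠ ⊤ := hΩb.measure_lt_top.ne
  have hEd' : Pairwise (Disjoint on E) := fun i j h => hEd i j h
  have hFd' : Pairwise (Disjoint on F) := fun i j h => hFd i j h
  have huE : ∀ i, ∀ x ∈ E i, u x = q i := fun i x hx =>
    (hu x).trans (sum_indicator_apply_of_mem hEd' q hx)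
  have hvF : ∀ j, ∀ x ∈ F j, v x = r j := fun j x hx =>
    (hv x).trans (sum_indicator_apply_of_mem hFd' r hx)
  have hcell : ∀ t p, ∀ x ∈ commonRefinement E F p,
      u x + t * v x = q (ofLex p).1 + t * r (ofLex p).2 := fun t p x hx => by
    rw [huE _ x hx.1, hvF _ x hx.2]
  have hΩcells := iUnion_commonRefinement hEu hFu
  have hlex := eventually_strictAnti_lex hq hr
  obtain ⟨t₀, ht₀, hlex₀⟩ := mem_nhdsGT_iff_exists_Ioo_subset.mp hlex
  refine ⟨⟨t₀, ht₀, fun t ht ht' => ⟨fun i j => ?_, fun x hx y hy hxy => ?_⟩⟩,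
    fun i j s hs₁ hs₂ => ?_⟩
  · exact setOf_mem_and_eq_of_iUnion_eq (hlex₀ ⟨ht, ht'⟩).injective hΩcells (hcell t)
      (toLex (i, j))
  · obtain ⟨p, hxp⟩ := mem_iUnion.mp (hΩcells ▸ hx)
    obtain ⟨p', hyp⟩ := mem_iUnion.mp (hΩcells ▸ hy)
    rw [hcell t p x hxp, hcell t p' y hyp] at hxy
    rw [huE _ x hxp.1, huE _ y hyp.1, (hlex₀ ⟨ht, ht'⟩).injective hxy]
  · simp only [← measureReal_def] at hs₁ hs₂
    have hu_s := decRearr_eq_of_lex_bounds hq hΩ hEm hEd' hEu hFm hFd' hFu huE hs₁ hs₂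
    refine tendsto_const_nhds.congr' ?_
    filter_upwards [hlex, self_mem_nhdsWithin] with t hc (ht : 0 < t)
    rw [decRearr_add_mul_eq_of_lex_bounds hc hΩ hEm hEd' hEu hFm hFd' hFu huE hvF hs₁ hs₂, hu_s,
      add_sub_cancel_left, mul_div_cancel_left₀ _ ht.ne']

/-- For step functions `u = Σ q_i χ_{E_i}` and `v = Σ r_j χ_{F_j}`, for all small `t > 0`
the level sets of `u + t v` are exactly `E_i ∩ F_j`, each level set of `u + tv` lies in a
single level set of `u`, and the relative rearrangement
`v_{*u}(s) = lim_{t→0⁺} ((u+tv)_*(s) − u_*(s))/t` equals `r_j` on the interval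
`J_j^i = [a_{i-1} + Σ_{k<j}|E_i∩F_k|, a_{i-1} + Σ_{k≤j}|E_i∩F_k|)`. -/
theorem stmt_9 {d : ℕ} (Ω : Set (EuclideanSpace ℝ (Fin d)))
    (hΩo : IsOpen Ω) (hΩb : Bornology.IsBounded Ω)
    (n m : ℕ) (q : Fin n → ℝ) (hq : StrictAnti q) (r : Fin m → ℝ) (hr : StrictAnti r)
    (E : Fin n → Set (EuclideanSpace ℝ (Fin d)))
    (hEm : ∀ i, MeasurableSet (E i))
    (hEd : ∀ i j, i ≠ j → Disjoint (E i) (E j))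
    (hEu : (⋃ i, E i) = Ω)
    (F : Fin m → Set (EuclideanSpace ℝ (Fin d)))
    (hFm : ∀ j, MeasurableSet (F j))
    (hFd : ∀ i j, i ≠ j → Disjoint (F i) (F j))
    (hFu : (⋃ j, F j) = Ω)
    (u v : EuclideanSpace ℝ (Fin d) → ℝ)
    (hu : ∀ x, u x = ∑ i, Set.indicator (E i) (fun _ => q i) x)
    (hv : ∀ x, v x = ∑ j, Set.indicator (F j) (fun _ => r j) x) :
    (∃ t0 > (0 : ℝ), ∀ t, 0 < t → t < t0 →
      (∀ (i : Fin n) (j : Fin m),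
        {x | x ∈ Ω ∧ u x + t * v x = q i + t * r j} = E i ∩ F j) ∧
      (∀ x ∈ Ω, ∀ y ∈ Ω, u x + t * v x = u y + t * v y → u x = u y))
    ∧ (∀ (i : Fin n) (j : Fin m) (s : ℝ),
        (∑ k ∈ Finset.univ.filter (fun k => k < i), (volume (E k)).toReal)
            + (∑ k ∈ Finset.univ.filter (fun k => k < j), (volume (E i ∩ F k)).toReal) ≤ s →
        s < (∑ k ∈ Finset.univ.filter (fun k => k < i), (volume (E k)).toReal)
            + (∑ k ∈ Finset.univ.filter (fun k => k ≤ j), (volume (E i ∩ F k)).toReal) →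
        Tendsto (fun t : ℝ =>
            (decRearr Ω (fun x => u x + t * v x) s - decRearr Ω u s) / t)
          (nhdsWithin 0 (Ioi 0)) (nhds (r j))) :=
  stmt_9_general Ω hΩb n m q hq r hr E hEm hEd hEu F hFm hFd hFu u v hu hv
end

section
/- Contrast change property: if v : [0,L] → ℝ is strictly decreasing and continuous, then there exists a strictly increasing function g : ℝ → ℝ such that the filtered function V(t) = (∫_0^L K_h(v(t)−v(s)) v(s) w̃(s) ds)/(∫_0^L K_h(v(t)−v(s)) w̃(s) ds) satisfies V(t) = g(v(t)) for all t ∈ [0,L], where K is the Gaussian K(ξ) = exp(−ξ²). -/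
open MeasureTheory Set

lemma gauss_pos {h x1 x2 a b : ℝ} (hh : 0 < h) (hx : x1 < x2) (hab : b < a) :
    0 < (Real.exp (-((x2 - a) / h) ^ 2) * Real.exp (-((x1 - b) / h) ^ 2)
        - Real.exp (-((x1 - a) / h) ^ 2) * Real.exp (-((x2 - b) / h) ^ 2)) * (a - b) := by
  have h2 : (0:ℝ) < h ^ 2 := by positivity
  apply mul_pos _ (by linarith)
  rw [← Real.exp_add, ← Real.exp_add, sub_pos, Real.exp_lt_exp]
  have key : (-((x2 - a) / h) ^ 2 + -((x1 - b) / h) ^ 2)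
      - (-((x1 - a) / h) ^ 2 + -((x2 - b) / h) ^ 2) = 2 * (x2 - x1) * (a - b) / h ^ 2 := by
    field_simp
    ring
  nlinarith [div_pos (by nlinarith : (0:ℝ) < 2 * (x2 - x1) * (a - b)) h2]

lemma gauss_key {h x1 x2 a b : ℝ} (hh : 0 < h) (hx : x1 < x2) :
    0 ≤ (Real.exp (-((x2 - a) / h) ^ 2) * Real.exp (-((x1 - b) / h) ^ 2)
        - Real.exp (-((x1 - a) / h) ^ 2) * Real.exp (-((x2 - b) / h) ^ 2)) * (a - b) := by
  rcases lt_trichotomy a b with hab | hab | hab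
  · have := gauss_pos hh hx (a := b) (b := a) hab
    nlinarith [this]
  · simp [hab]
  · exact (gauss_pos hh hx hab).le

lemma gauss_pos' {h x1 x2 a b : ℝ} (hh : 0 < h) (hx : x1 < x2) (hab : a ≠ b) :
    0 < (Real.exp (-((x2 - a) / h) ^ 2) * Real.exp (-((x1 - b) / h) ^ 2)
        - Real.exp (-((x1 - a) / h) ^ 2) * Real.exp (-((x2 - b) / h) ^ 2)) * (a - b) := by
  rcases hab.lt_or_gt with hab | hab
  · have := gauss_pos hh hx (a := b) (b := a) hab
    nlinarith [this]
  · exact gauss_pos hh hx hab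

/-- Contrast change property: for strictly decreasing continuous `v` and the Gaussian
kernel, the filtered function is a strictly increasing function `g` of `v`. -/
theorem stmt_14 (L h : ℝ) (hL : 0 < L) (hh : 0 < h)
    (v : ℝ → ℝ) (hvc : ContinuousOn v (Icc 0 L)) (hvdec : StrictAntiOn v (Icc 0 L))
    (w : ℝ → ℝ) (hwm : Measurable w)
    (hw0 : ∀ᵐ s ∂(volume.restrict (Ioo (0 : ℝ) L)), 0 < w s)
    (hwb : ∃ M, ∀ s ∈ Icc (0 : ℝ) L, w s ≤ M) :
    ∃ g : ℝ → ℝ, StrictMono g ∧ ∀ t ∈ Icc (0 : ℝ) L,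
      (∫ s in Ioo (0 : ℝ) L, Real.exp (-((v t - v s) / h) ^ 2) * v s * w s)
          / (∫ s in Ioo (0 : ℝ) L, Real.exp (-((v t - v s) / h) ^ 2) * w s)
        = g (v t) := by
  obtain ⟨M, hM⟩ := hwb
  set μ : Measure ℝ := volume.restrict (Ioo (0 : ℝ) L) with hμdef
  have hμuniv : μ univ = ENNReal.ofReal L := by
    rw [hμdef, Measure.restrict_apply_univ, Real.volume_Ioo, sub_zero]
  haveI : IsFiniteMeasure μ := ⟨by rw [hμuniv]; exact ENNReal.ofReal_lt_top⟩
  have hIoosub : Ioo (0:ℝ) L ⊆ Icc 0 L := Ioo_subset_Icc_self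
  have hmem : ∀ᵐ s ∂μ, s ∈ Ioo (0:ℝ) L := ae_restrict_mem measurableSet_Ioo
  -- measurability of v
  have hvae : AEStronglyMeasurable v μ :=
    (hvc.mono hIoosub).aestronglyMeasurable measurableSet_Ioo
  -- bound on v
  obtain ⟨C, hC⟩ := isCompact_Icc.exists_bound_of_continuousOn hvc
  set M' : ℝ := max M 0 with hM'def
  have hwbd : ∀ᵐ s ∂μ, |w s| ≤ M' := by
    filter_upwards [hw0, hmem] with s hs hsmem
    rw [abs_of_pos hs]
    exact le_max_of_le_left (hM s (hIoosub hsmem))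
  set N : ℝ → ℝ := fun x => ∫ s in Ioo (0:ℝ) L, Real.exp (-((x - v s) / h) ^ 2) * v s * w s
    with hNdef
  set D : ℝ → ℝ := fun x => ∫ s in Ioo (0:ℝ) L, Real.exp (-((x - v s) / h) ^ 2) * w s
    with hDdef
  -- measurability of the kernel
  have hKae : ∀ x : ℝ, AEStronglyMeasurable (fun s => Real.exp (-((x - v s) / h) ^ 2)) μ := by
    intro x
    have : Continuous (fun y : ℝ => Real.exp (-((x - y) / h) ^ 2)) := by continuity
    exact this.comp_aestronglyMeasurable hvae
  have hKle : ∀ x s : ℝ, Real.exp (-((x - v s) / h) ^ 2) ≤ 1 := fun x s =>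
    Real.exp_le_one_iff.2 (neg_nonpos.2 (sq_nonneg _))
  have hKpos : ∀ x s : ℝ, 0 < Real.exp (-((x - v s) / h) ^ 2) := fun x s => Real.exp_pos _
  -- integrability of the two integrands
  have hIntN : ∀ x : ℝ, Integrable (fun s => Real.exp (-((x - v s) / h) ^ 2) * v s * w s) μ := by
    intro x
    refine Integrable.mono' (integrable_const (max C 0 * M')) (((hKae x).mul hvae).mul
      hwm.aestronglyMeasurable) ?_
    filter_upwards [hwbd, hmem] with s hws hsmem
    have h1 : |v s| ≤ max C 0 := le_max_of_le_left (hC s (hIoosub hsmem))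
    have h2 : (0:ℝ) ≤ M' := le_max_right _ _
    rw [Real.norm_eq_abs, abs_mul, abs_mul, abs_of_pos (hKpos x s)]
    calc Real.exp (-((x - v s) / h) ^ 2) * |v s| * |w s|
        ≤ 1 * max C 0 * M' := by
          apply mul_le_mul (mul_le_mul (hKle x s) h1 (abs_nonneg _) zero_le_one) hws
            (abs_nonneg _)
          positivity
      _ = max C 0 * M' := by ring
  have hIntD : ∀ x : ℝ, Integrable (fun s => Real.exp (-((x - v s) / h) ^ 2) * w s) μ := by
    intro x
    refine Integrable.mono' (integrable_const M') ((hKae x).mul hwm.aestronglyMeasurable) ?_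
    filter_upwards [hwbd] with s hws
    rw [Real.norm_eq_abs, abs_mul, abs_of_pos (hKpos x s)]
    calc Real.exp (-((x - v s) / h) ^ 2) * |w s| ≤ 1 * M' :=
          mul_le_mul (hKle x s) hws (abs_nonneg _) zero_le_one
      _ = M' := one_mul _
  -- positivity of denominator
  have hDpos : ∀ x : ℝ, 0 < D x := by
    intro x
    have hpos : ∀ᵐ s ∂μ, 0 < Real.exp (-((x - v s) / h) ^ 2) * w s := by
      filter_upwards [hw0] with s hws; exact mul_pos (hKpos x s) hws
    show 0 < ∫ s, Real.exp (-((x - v s) / h) ^ 2) * w s ∂μ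
    rw [integral_pos_iff_support_of_nonneg_ae (hpos.mono fun s hs => hs.le) (hIntD x)]
    have hss : ∀ᵐ s ∂μ, s ∈ Function.support fun s => Real.exp (-((x - v s) / h) ^ 2) * w s := by
      filter_upwards [hpos] with s hs; exact ne_of_gt hs
    have hsupp : μ (Function.support fun s => Real.exp (-((x - v s) / h) ^ 2) * w s)ᶜ = 0 := by
      exact ae_iff.mp hss
    calc (0:ENNReal) < ENNReal.ofReal L := ENNReal.ofReal_pos.2 hL
      _ = μ univ := hμuniv.symm
      _ = μ (Function.support fun s => Real.exp (-((x - v s) / h) ^ 2) * w s) :=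
          (measure_congr (ae_eq_univ.2 hsupp)).symm
  -- main monotonicity
  have hmono : ∀ x1 x2 : ℝ, x1 < x2 → N x1 * D x2 < N x2 * D x1 := by
    intro x1 x2 hx
    set f2 : ℝ → ℝ := fun s => Real.exp (-((x2 - v s) / h) ^ 2) * v s * w s with hf2
    set f1 : ℝ → ℝ := fun s => Real.exp (-((x1 - v s) / h) ^ 2) * v s * w s with hf1
    set g2 : ℝ → ℝ := fun s => Real.exp (-((x2 - v s) / h) ^ 2) * w s with hg2
    set g1 : ℝ → ℝ := fun s => Real.exp (-((x1 - v s) / h) ^ 2) * w s with hg1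
    have if2 : Integrable f2 μ := hIntN x2
    have if1 : Integrable f1 μ := hIntN x1
    have ig2 : Integrable g2 μ := hIntD x2
    have ig1 : Integrable g1 μ := hIntD x1
    set B : ℝ × ℝ → ℝ := fun p => f2 p.1 * g1 p.2 - f1 p.1 * g2 p.2 with hBdef
    have hBint : Integrable B (μ.prod μ) := (if2.mul_prod ig1).sub (if1.mul_prod ig2)
    have hBval : ∫ p, B p ∂(μ.prod μ) = N x2 * D x1 - N x1 * D x2 := by
      have e : ∫ p, B p ∂(μ.prod μ) =
          (∫ p : ℝ × ℝ, f2 p.1 * g1 p.2 ∂(μ.prod μ)) -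
            ∫ p : ℝ × ℝ, f1 p.1 * g2 p.2 ∂(μ.prod μ) :=
        integral_sub (if2.mul_prod ig1) (if1.mul_prod ig2)
      rw [e, integral_prod_mul, integral_prod_mul]
    -- symmetrized integrand
    set A : ℝ × ℝ → ℝ := fun p => B p + B p.swap with hAdef
    have hAint : Integrable A (μ.prod μ) := hBint.add hBint.swap
    have hAval : ∫ p, A p ∂(μ.prod μ) = 2 * ∫ p, B p ∂(μ.prod μ) := by
      have h1 : ∫ p : ℝ × ℝ, B p.swap ∂(μ.prod μ) = ∫ p, B p ∂(μ.prod μ) :=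
        integral_prod_swap B
      have h2 : ∫ p, A p ∂(μ.prod μ) =
          (∫ p, B p ∂(μ.prod μ)) + ∫ p : ℝ × ℝ, B p.swap ∂(μ.prod μ) :=
        integral_add hBint hBint.swap
      rw [h2, h1]; ring
    -- pointwise formula for A
    have hAeq : ∀ p : ℝ × ℝ, A p =
        ((Real.exp (-((x2 - v p.1) / h) ^ 2) * Real.exp (-((x1 - v p.2) / h) ^ 2)
          - Real.exp (-((x1 - v p.1) / h) ^ 2) * Real.exp (-((x2 - v p.2) / h) ^ 2))
          * (v p.1 - v p.2)) * (w p.1 * w p.2) := by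
      intro p; rw [hAdef, hBdef]; simp only [Prod.fst_swap, Prod.snd_swap]; ring
    -- a.e. facts on the product
    have hw1 : ∀ᵐ p ∂(μ.prod μ), 0 < w p.1 :=
      Measure.quasiMeasurePreserving_fst.ae hw0
    have hw2 : ∀ᵐ p ∂(μ.prod μ), 0 < w p.2 :=
      Measure.quasiMeasurePreserving_snd.ae hw0
    have hAnonneg : ∀ᵐ p ∂(μ.prod μ), 0 ≤ A p := by
      filter_upwards [hw1, hw2] with p h1 h2
      rw [hAeq p]
      exact mul_nonneg (gauss_key hh hx) (mul_pos h1 h2).le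
    -- strict positivity on a set of positive measure
    have hApos : 0 < ∫ p, A p ∂(μ.prod μ) := by
      rw [integral_pos_iff_support_of_nonneg_ae hAnonneg hAint]
      set S : Set (ℝ × ℝ) := Ioo (0:ℝ) (L/2) ×ˢ Ioo (L/2) L with hSdef
      have hSsub : ∀ᵐ p ∂(μ.prod μ), p ∈ S → p ∈ Function.support A := by
        filter_upwards [hw1, hw2] with p h1 h2 hpS
        obtain ⟨hp1, hp2⟩ := hpS
        have hp1' : p.1 ∈ Icc (0:ℝ) L := ⟨hp1.1.le, by linarith [hp1.2]⟩
        have hp2' : p.2 ∈ Icc (0:ℝ) L := ⟨by linarith [hp2.1], hp2.2.le⟩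
        have hvlt : v p.2 < v p.1 := hvdec hp1' hp2' (by linarith [hp1.2, hp2.1])
        have : 0 < A p := by
          rw [hAeq p]
          exact mul_pos (gauss_pos' hh hx (ne_of_gt hvlt)) (mul_pos h1 h2)
        exact ne_of_gt this
      have hnull : (μ.prod μ) (S \ Function.support A) = 0 := by
        rw [ae_iff] at hSsub
        refine measure_mono_null ?_ hSsub
        intro p hp
        simp only [mem_setOf_eq, not_forall]
        exact ⟨hp.1, hp.2⟩
      have hSpos : 0 < (μ.prod μ) S := by
        rw [hSdef, Measure.prod_prod]
        have e1 : μ (Ioo (0:ℝ) (L/2)) = ENNReal.ofReal (L/2) := by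
          rw [hμdef, Measure.restrict_apply measurableSet_Ioo,
            inter_eq_self_of_subset_left (Ioo_subset_Ioo_right (by linarith)),
            Real.volume_Ioo, sub_zero]
        have e2 : μ (Ioo (L/2) L) = ENNReal.ofReal (L/2) := by
          rw [hμdef, Measure.restrict_apply measurableSet_Ioo,
            inter_eq_self_of_subset_left (Ioo_subset_Ioo_left (by linarith)),
            Real.volume_Ioo]
          congr 1; ring
        rw [e1, e2]
        have : (0:ENNReal) < ENNReal.ofReal (L/2) := ENNReal.ofReal_pos.2 (by linarith)
        exact ENNReal.mul_pos (ne_of_gt this) (ne_of_gt this)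
      calc (0:ENNReal) < (μ.prod μ) S := hSpos
        _ ≤ (μ.prod μ) (Function.support A ∪ (S \ Function.support A)) := by
            apply measure_mono; intro p hp
            by_cases hpA : p ∈ Function.support A
            · exact Or.inl hpA
            · exact Or.inr ⟨hp, hpA⟩
        _ ≤ (μ.prod μ) (Function.support A) + (μ.prod μ) (S \ Function.support A) :=
            measure_union_le _ _
        _ = (μ.prod μ) (Function.support A) := by rw [hnull, add_zero]
    rw [hAval] at hApos
    rw [hBval] at hApos
    linarith
  refine ⟨fun x => N x / D x, ?_, fun t ht => rfl⟩
  intro x1 x2 hx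
  rw [div_lt_div_iff₀ (hDpos x1) (hDpos x2)]
  exact hmono x1 x2 hx
end

section
/- Stability of the rearranged filter under L^∞ perturbations: if v_n → v strongly in L^∞(0,L), ω_n → ω weakly* in L^∞(0,L) with ω_n, ω ≥ c > 0, and K is bounded and Lipschitz continuous, then for each t with positive limit denominator, V_n(t) = (∫_0^L K_h(v_n(t)−v_n(s)) v_n(s) ω_n(s) ds)/(∫_0^L K_h(v_n(t)−v_n(s)) ω_n(s) ds) converges to V(t) = (∫_0^L K_h(v(t)−v(s)) v(s) ω(s) ds)/(∫_0^L K_h(v(t)−v(s)) ω(s) ds). -/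
open MeasureTheory Set Filter

lemma int_bdd {L B : ℝ} (f : ℝ → ℝ) (hm : Measurable f)
    (hb : ∀ s ∈ Icc (0 : ℝ) L, |f s| ≤ B) :
    Integrable f (volume.restrict (Ioo (0 : ℝ) L)) := by
  haveI : IsFiniteMeasure (volume.restrict (Ioo (0 : ℝ) L)) := by
    constructor
    rw [Measure.restrict_apply_univ, Real.volume_Ioo]
    exact ENNReal.ofReal_lt_top
  refine ⟨hm.aestronglyMeasurable, HasFiniteIntegral.of_bounded (C := B) ?_⟩
  refine (ae_restrict_iff' measurableSet_Ioo).2 (ae_of_all _ fun s hs => ?_)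
  exact hb s (Ioo_subset_Icc_self hs)

lemma key_conv {L Mω B : ℝ} (hL : 0 < L)
    (ωn : ℕ → ℝ → ℝ) (ω : ℝ → ℝ)
    (hωnm : ∀ n, Measurable (ωn n)) (hωm : Measurable ω)
    (hωnb : ∀ n, ∀ s ∈ Icc (0:ℝ) L, |ωn n s| ≤ Mω)
    (hωconv : ∀ g : ℝ → ℝ, Integrable g (volume.restrict (Ioo (0 : ℝ) L)) →
      Tendsto (fun n => ∫ s in Ioo (0 : ℝ) L, ωn n s * g s) atTop
        (nhds (∫ s in Ioo (0 : ℝ) L, ω s * g s)))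
    (gn : ℕ → ℝ → ℝ) (g : ℝ → ℝ)
    (hgnm : ∀ n, Measurable (gn n)) (hgm : Measurable g)
    (hgnb : ∀ n, ∀ s ∈ Icc (0:ℝ) L, |gn n s| ≤ B)
    (hgb : ∀ s ∈ Icc (0:ℝ) L, |g s| ≤ B)
    (hgu : TendstoUniformlyOn gn g atTop (Icc 0 L)) :
    Tendsto (fun n => ∫ s in Ioo (0 : ℝ) L, gn n s * ωn n s) atTop
      (nhds (∫ s in Ioo (0 : ℝ) L, g s * ω s)) := by
  haveI : IsFiniteMeasure (volume.restrict (Ioo (0 : ℝ) L)) := by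
    constructor
    rw [Measure.restrict_apply_univ, Real.volume_Ioo]
    exact ENNReal.ofReal_lt_top
  have hMω0 : 0 ≤ Mω := le_trans (abs_nonneg _) (hωnb 0 0 ⟨le_refl 0, hL.le⟩)
  have hB0 : 0 ≤ B := le_trans (abs_nonneg _) (hgb 0 ⟨le_refl 0, hL.le⟩)
  have h1 : Tendsto (fun n => ∫ s in Ioo (0 : ℝ) L, ωn n s * g s) atTop
      (nhds (∫ s in Ioo (0 : ℝ) L, ω s * g s)) := hωconv g (int_bdd g hgm hgb)
  have h2 : Tendsto (fun n => ∫ s in Ioo (0 : ℝ) L, (gn n s - g s) * ωn n s) atTop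
      (nhds 0) := by
    rw [Metric.tendsto_atTop]
    intro ε hε
    have hε' : 0 < ε / (2 * (Mω * L + 1)) := by positivity
    obtain ⟨N, hN⟩ := (Metric.tendstoUniformlyOn_iff.1 hgu _ hε').exists_forall_of_atTop
    refine ⟨N, fun n hn => ?_⟩
    rw [Real.dist_eq, sub_zero]
    have hbnd : ‖∫ s in Ioo (0 : ℝ) L, (gn n s - g s) * ωn n s‖
        ≤ (ε / (2 * (Mω * L + 1)) * Mω) * ((volume.restrict (Ioo (0:ℝ) L)) univ).toReal := by
      refine norm_integral_le_of_norm_le_const ?_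
      refine (ae_restrict_iff' measurableSet_Ioo).2 (ae_of_all _ fun s hs => ?_)
      have hs' := Ioo_subset_Icc_self hs
      have hd := hN n hn s hs'
      rw [Real.dist_eq] at hd
      have hgd : |gn n s - g s| ≤ ε / (2 * (Mω * L + 1)) := by
        rw [abs_sub_comm]; exact hd.le
      calc ‖(gn n s - g s) * ωn n s‖ = |gn n s - g s| * |ωn n s| := abs_mul _ _
        _ ≤ ε / (2 * (Mω * L + 1)) * Mω :=
          mul_le_mul hgd (hωnb n s hs') (abs_nonneg _) hε'.le
    have hvol : ((volume.restrict (Ioo (0:ℝ) L)) univ).toReal = L := by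
      rw [Measure.restrict_apply_univ, Real.volume_Ioo, ENNReal.toReal_ofReal (by linarith)]
      ring
    rw [hvol] at hbnd
    refine lt_of_le_of_lt hbnd ?_
    have hmul : ε / (2 * (Mω * L + 1)) * (2 * (Mω * L + 1)) = ε :=
      div_mul_cancel₀ ε (by positivity)
    nlinarith [mul_nonneg hMω0 hL.le, hε'.le, mul_nonneg (mul_nonneg hε'.le hMω0) hL.le]
  have heq : ∀ n, (∫ s in Ioo (0:ℝ) L, gn n s * ωn n s)
      = (∫ s in Ioo (0:ℝ) L, (gn n s - g s) * ωn n s)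
        + ∫ s in Ioo (0:ℝ) L, ωn n s * g s := by
    intro n
    have i1 : Integrable (fun s => (gn n s - g s) * ωn n s)
        (volume.restrict (Ioo (0:ℝ) L)) := by
      refine int_bdd (B := (B + B) * Mω) _ (((hgnm n).sub hgm).mul (hωnm n)) (fun s hs => ?_)
      rw [abs_mul]
      refine mul_le_mul ?_ (hωnb n s hs) (abs_nonneg _) (by linarith)
      calc |gn n s - g s| ≤ |gn n s| + |g s| := abs_sub _ _
        _ ≤ B + B := add_le_add (hgnb n s hs) (hgb s hs)
    have i2 : Integrable (fun s => g s * ωn n s) (volume.restrict (Ioo (0:ℝ) L)) := by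
      refine int_bdd (B := B * Mω) _ (hgm.mul (hωnm n)) (fun s hs => ?_)
      rw [abs_mul]
      exact mul_le_mul (hgb s hs) (hωnb n s hs) (abs_nonneg _) hB0
    have e1 : ∫ s in Ioo (0:ℝ) L, ωn n s * g s = ∫ s in Ioo (0:ℝ) L, g s * ωn n s := by
      simp_rw [mul_comm]
    rw [e1, ← integral_add i1 i2]
    congr 1; funext s; ring
  have h3 := h2.add h1
  rw [zero_add] at h3
  have e2 : ∫ s in Ioo (0:ℝ) L, ω s * g s = ∫ s in Ioo (0:ℝ) L, g s * ω s := by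
    simp_rw [mul_comm]
  rw [e2] at h3
  exact h3.congr (fun n => (heq n).symm)

/-- Stability of the rearranged filter: if `v_n → v` strongly in `L^∞(0,L)` (uniformly),
`ω_n → ω` weakly* in `L^∞(0,L)` with `ω_n, ω ≥ c > 0`, and `K` is bounded and Lipschitz,
then `V_n(t) → V(t)` at each `t` with positive limit denominator. -/
theorem stmt_19 (L h c : ℝ) (hL : 0 < L) (hh : 0 < h) (hc : 0 < c)
    (K : ℝ → ℝ) (hK0 : ∀ ξ, 0 ≤ K ξ) (hKb : ∃ M, ∀ ξ, K ξ ≤ M)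
    (hKlip : ∃ Lip : NNReal, LipschitzWith Lip K)
    (vn : ℕ → ℝ → ℝ) (v : ℝ → ℝ) (ωn : ℕ → ℝ → ℝ) (ω : ℝ → ℝ)
    (hvnm : ∀ n, Measurable (vn n)) (hvm : Measurable v)
    (hωnm : ∀ n, Measurable (ωn n)) (hωm : Measurable ω)
    (hvb : ∃ M, ∀ s ∈ Icc (0 : ℝ) L, |v s| ≤ M)
    (hvnb : ∃ M, ∀ n, ∀ s ∈ Icc (0 : ℝ) L, |vn n s| ≤ M)
    (hωnb : ∃ M, ∀ n, ∀ s ∈ Icc (0 : ℝ) L, ωn n s ≤ M)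
    (hωb : ∃ M, ∀ s ∈ Icc (0 : ℝ) L, ω s ≤ M)
    (hωnlb : ∀ n, ∀ s ∈ Icc (0 : ℝ) L, c ≤ ωn n s)
    (hωlb : ∀ s ∈ Icc (0 : ℝ) L, c ≤ ω s)
    (hvconv : TendstoUniformlyOn vn v atTop (Icc 0 L))
    (hωconv : ∀ g : ℝ → ℝ, Integrable g (volume.restrict (Ioo (0 : ℝ) L)) →
      Tendsto (fun n => ∫ s in Ioo (0 : ℝ) L, ωn n s * g s) atTop
        (nhds (∫ s in Ioo (0 : ℝ) L, ω s * g s)))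
    (t : ℝ) (ht : t ∈ Icc (0 : ℝ) L)
    (hden : 0 < ∫ s in Ioo (0 : ℝ) L, K ((v t - v s) / h) * ω s) :
    Tendsto (fun n =>
        (∫ s in Ioo (0 : ℝ) L, K ((vn n t - vn n s) / h) * vn n s * ωn n s)
          / (∫ s in Ioo (0 : ℝ) L, K ((vn n t - vn n s) / h) * ωn n s))
      atTop
      (nhds ((∫ s in Ioo (0 : ℝ) L, K ((v t - v s) / h) * v s * ω s)
        / (∫ s in Ioo (0 : ℝ) L, K ((v t - v s) / h) * ω s))) := by
  obtain ⟨Lip, hLip⟩ := hKlip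
  obtain ⟨MK, hMK⟩ := hKb
  obtain ⟨Mv, hMv⟩ := hvb
  obtain ⟨Mvn, hMvn⟩ := hvnb
  obtain ⟨Mω, hMω⟩ := hωnb
  have hKm : Measurable K := hLip.continuous.measurable
  have hMK0 : 0 ≤ MK := le_trans (hK0 0) (hMK 0)
  have hMv0 : 0 ≤ Mv := le_trans (abs_nonneg _) (hMv 0 ⟨le_refl 0, hL.le⟩)
  have hKabs : ∀ ξ, |K ξ| ≤ MK := fun ξ => by rw [abs_of_nonneg (hK0 ξ)]; exact hMK ξ
  -- bound for ωn in absolute value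
  have hωnabs : ∀ n, ∀ s ∈ Icc (0:ℝ) L, |ωn n s| ≤ Mω := fun n s hs => by
    rw [abs_of_nonneg (le_trans hc.le (hωnlb n s hs))]; exact hMω n s hs
  -- uniform convergence of the kernel term
  have hKu : TendstoUniformlyOn (fun n s => K ((vn n t - vn n s) / h))
      (fun s => K ((v t - v s) / h)) atTop (Icc 0 L) := by
    rw [Metric.tendstoUniformlyOn_iff]
    intro ε hε
    set δ := ε * h / (2 * ((Lip : ℝ) + 1)) with hδdef
    have hδ : 0 < δ := by positivity
    filter_upwards [Metric.tendstoUniformlyOn_iff.1 hvconv δ hδ] with n hn s hs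
    have h1 := hn t ht
    have h2 := hn s hs
    rw [Real.dist_eq] at h1 h2
    have hd := hLip.dist_le_mul ((v t - v s) / h) ((vn n t - vn n s) / h)
    have hdd : dist ((v t - v s) / h) ((vn n t - vn n s) / h)
        ≤ (|v t - vn n t| + |v s - vn n s|) / h := by
      rw [Real.dist_eq]
      have e : (v t - v s) / h - (vn n t - vn n s) / h
          = ((v t - vn n t) - (v s - vn n s)) / h := by ring
      rw [e, abs_div, abs_of_pos hh]
      gcongr
      exact abs_sub _ _
    have hLip0 : (0:ℝ) ≤ (Lip : ℝ) := Lip.coe_nonneg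
    calc dist (K ((v t - v s) / h)) (K ((vn n t - vn n s) / h))
        ≤ (Lip : ℝ) * dist ((v t - v s) / h) ((vn n t - vn n s) / h) := hd
      _ ≤ (Lip : ℝ) * ((|v t - vn n t| + |v s - vn n s|) / h) :=
          mul_le_mul_of_nonneg_left hdd hLip0
      _ < ε := by
          rw [mul_div_assoc', div_lt_iff₀ hh]
          have hmul : δ * (2 * ((Lip:ℝ) + 1)) = ε * h :=
            div_mul_cancel₀ (ε * h) (by positivity)
          have hle : (Lip:ℝ) * (|v t - vn n t| + |v s - vn n s|) ≤ (Lip:ℝ) * (2 * δ) :=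
            mul_le_mul_of_nonneg_left (by linarith) hLip0
          nlinarith [hδ, hLip0]
  -- uniform convergence of the kernel·v term
  have hKvu : TendstoUniformlyOn (fun n s => K ((vn n t - vn n s) / h) * vn n s)
      (fun s => K ((v t - v s) / h) * v s) atTop (Icc 0 L) := by
    rw [Metric.tendstoUniformlyOn_iff]
    intro ε hε
    set δ := ε / (Mv + MK + 1) with hδdef
    have hδ : 0 < δ := by positivity
    filter_upwards [Metric.tendstoUniformlyOn_iff.1 hKu δ hδ,
      Metric.tendstoUniformlyOn_iff.1 hvconv δ hδ] with n hn1 hn2 s hs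
    have h1 := hn1 s hs
    have h2 := hn2 s hs
    rw [Real.dist_eq] at h1 h2 ⊢
    have e : K ((v t - v s) / h) * v s - K ((vn n t - vn n s) / h) * vn n s
        = (K ((v t - v s) / h) - K ((vn n t - vn n s) / h)) * v s
          + K ((vn n t - vn n s) / h) * (v s - vn n s) := by ring
    rw [e]
    have hmul : δ * (Mv + MK + 1) = ε := div_mul_cancel₀ ε (by positivity)
    calc |(K ((v t - v s) / h) - K ((vn n t - vn n s) / h)) * v s
          + K ((vn n t - vn n s) / h) * (v s - vn n s)|
        ≤ |(K ((v t - v s) / h) - K ((vn n t - vn n s) / h)) * v s|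
          + |K ((vn n t - vn n s) / h) * (v s - vn n s)| := abs_add_le _ _
      _ = |K ((v t - v s) / h) - K ((vn n t - vn n s) / h)| * |v s|
          + |K ((vn n t - vn n s) / h)| * |v s - vn n s| := by rw [abs_mul, abs_mul]
      _ ≤ δ * Mv + MK * δ := by
          refine add_le_add (mul_le_mul h1.le (hMv s hs) (abs_nonneg _) hδ.le)
            (mul_le_mul (hKabs _) h2.le (abs_nonneg _) hMK0)
      _ < ε := by nlinarith [hδ]
  -- denominator convergence
  have hden_conv := key_conv (Mω := Mω) (B := MK) hL ωn ω hωnm hωm hωnabs hωconv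
    (fun n s => K ((vn n t - vn n s) / h)) (fun s => K ((v t - v s) / h))
    (fun n => hKm.comp ((measurable_const.sub (hvnm n)).div_const h))
    (hKm.comp ((measurable_const.sub hvm).div_const h))
    (fun n s _ => hKabs _) (fun s _ => hKabs _) hKu
  -- numerator convergence
  have hnum_conv := key_conv (Mω := Mω) (B := MK * (Mvn + Mv)) hL ωn ω hωnm hωm hωnabs hωconv
    (fun n s => K ((vn n t - vn n s) / h) * vn n s)
    (fun s => K ((v t - v s) / h) * v s)
    (fun n => (hKm.comp ((measurable_const.sub (hvnm n)).div_const h)).mul (hvnm n))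
    ((hKm.comp ((measurable_const.sub hvm).div_const h)).mul hvm)
    (fun n s hs => by
      rw [abs_mul]
      refine mul_le_mul (hKabs _) ?_ (abs_nonneg _) hMK0
      have := hMvn n s hs
      have h0 : 0 ≤ Mv := hMv0
      linarith [abs_nonneg (v s), hMv s hs])
    (fun s hs => by
      rw [abs_mul]
      refine mul_le_mul (hKabs _) ?_ (abs_nonneg _) hMK0
      have hMvn0 : 0 ≤ Mvn := le_trans (abs_nonneg _) (hMvn 0 0 ⟨le_refl 0, hL.le⟩)
      linarith [hMv s hs]) hKvu
  exact hnum_conv.div hden_conv hden.ne'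
end
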